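/- Let n = 2, m = 1, C = {(x₁,x₂) : |x₁| ≤ 1, |x₂| ≤ 1}, F(y) = Ay with A = [[−2,3],[−2,1]], and B = (1,1)ᵀ. Let y⁰ = (0.7, −0.5)ᵀ and y² = (−0.6, 0.6)ᵀ. Then T_C(y⁰,y²) = ∞, i.e. y² is not reachable from y⁰ under the state constraint C. -/

import Mathlib

noncomputable section
open MeasureTheory Set RealInnerProductSpace
open scoped ENNReal

/-- Euclidean state space `ℝ^n`. -/
abbrev Euc (n : ℕ) := EuclideanSpace ℝ (Fin n)

/-- Orthogonal projection onto a subspace, viewed as a map into the ambient space. -/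
noncomputable def projS {n : ℕ} (G : Submodule ℝ (Euc n)) (x : Euc n) : Euc n :=
  (G.orthogonalProjectionOnto x : Euc n)

/-- The set of admissible controllability times `T` for the system `ẏ = F(y) + B u`
with state constraint `y(t) ∈ C`, steering `y0` to `y1`.  The control `u` is a
measurable essentially bounded function; the absolutely continuous trajectory `y`
is encoded via the integral equation. -/
def ctrlTimes {n m : ℕ} (F : Euc n → Euc n) (B : Euc m →ₗ[ℝ] Euc n)
    (C : Set (Euc n)) (y0 y1 : Euc n) : Set ℝ :=
  {T | 0 < T ∧ ∃ u : ℝ → Euc m, ∃ y : ℝ → Euc n,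
    Measurable u ∧ (∃ M : ℝ, ∀ t ∈ Icc (0:ℝ) T, ‖u t‖ ≤ M) ∧
    ContinuousOn y (Icc 0 T) ∧
    IntervalIntegrable (fun s => F (y s) + B (u s)) volume 0 T ∧
    (∀ t ∈ Icc (0:ℝ) T, y t = y0 + ∫ s in (0:ℝ)..t, (F (y s) + B (u s))) ∧
    (∀ t ∈ Icc (0:ℝ) T, y t ∈ C) ∧ y 0 = y0 ∧ y T = y1}

/-- The minimal controllability time `T_C(y0, y1)` (with the convention `inf ∅ = ∞`). -/
noncomputable def minTime {n m : ℕ} (F : Euc n → Euc n) (B : Euc m →ₗ[ℝ] Euc n)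
    (C : Set (Euc n)) (y0 y1 : Euc n) : ℝ≥0∞ :=
  sInf (ENNReal.ofReal '' ctrlTimes F B C y0 y1)

/-- The vector `(a, b)ᵀ ∈ ℝ²`. -/
noncomputable def v2 (a b : ℝ) : Euc 2 := (WithLp.equiv 2 _).symm ![a, b]

/-- The drift matrix `A = [[-2, 3], [-2, 1]]`. -/
noncomputable def Asq : Euc 2 →ₗ[ℝ] Euc 2 :=
  Matrix.toEuclideanLin (!![-2, 3; -2, 1] : Matrix (Fin 2) (Fin 2) ℝ)

/-- The control map `B = (1, 1)ᵀ`. -/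
noncomputable def Bsq : Euc 1 →ₗ[ℝ] Euc 2 :=
  Matrix.toEuclideanLin (!![1; 1] : Matrix (Fin 2) (Fin 1) ℝ)

/-- The square `C = {(x₁,x₂) : |x₁| ≤ 1, |x₂| ≤ 1}`. -/
def sqC : Set (Euc 2) := {x : Euc 2 | |x 0| ≤ 1 ∧ |x 1| ≤ 1}

/-!
The functional `w = y₁ - y₂` annihilates `B = (1, 1)ᵀ`, so along every trajectory
`ẇ = 2 y₂` whatever the control. Inside the square, `w < -1` forces `y₂ = y₁ - w > 0`,
so `w` cannot decrease while it is below `-1`. Starting from `w = 1.2` it therefore never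
reaches the value `-1.2` of the target.
-/

theorem le_of_eq_add_integral_of_nonneg_below {w g : ℝ → ℝ} {a b c : ℝ} (hab : a ≤ b)
    (hw : ContinuousOn w (Icc a b)) (hg : IntervalIntegrable g volume a b)
    (hwg : ∀ t ∈ Icc a b, w t = w a + ∫ s in a..t, g s) (ha : c ≤ w a)
    (hg_nonneg : ∀ s ∈ Icc a b, w s < c → 0 ≤ g s) : c ≤ w b := by
  set S := Icc a b ∩ w ⁻¹' Ici c
  have hS_bdd : BddAbove S := ⟨b, fun t ht => ht.1.2⟩
  have hS_closed : IsClosed S := hw.preimage_isClosed_of_isClosed isClosed_Icc isClosed_Ici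
  -- the last time at which `w ≥ c`
  set t₀ := sSup S
  obtain ⟨ht₀ : t₀ ∈ Icc a b, hct₀ : c ≤ w t₀⟩ :=
    hS_closed.csSup_mem ⟨a, left_mem_Icc.2 hab, ha⟩ hS_bdd
  have hbelow : ∀ s ∈ Ioc t₀ b, w s < c := fun s hs => by
    by_contra! h
    exact hs.1.not_ge (le_csSup hS_bdd ⟨⟨ht₀.1.trans hs.1.le, hs.2⟩, h⟩)
  have hincr : 0 ≤ ∫ s in t₀..b, g s := by
    rw [intervalIntegral.integral_of_le ht₀.2]
    exact setIntegral_nonneg measurableSet_Ioc fun s hs =>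
      hg_nonneg s ⟨ht₀.1.trans hs.1.le, hs.2⟩ (hbelow s hs)
  have ht₀_mem : t₀ ∈ uIcc a b := by rwa [uIcc_of_le hab]
  have hsplit : w b = w t₀ + ∫ s in t₀..b, g s := by
    rw [hwg b (right_mem_Icc.2 hab), hwg _ ht₀, add_assoc,
      intervalIntegral.integral_add_adjacent_intervals
        (hg.mono_set (uIcc_subset_uIcc_left ht₀_mem))
        (hg.mono_set (uIcc_subset_uIcc_right ht₀_mem))]
  linarith

theorem eq_add_integral_comp_of_eq_add_integral {E F : Type*} [NormedAddCommGroup E]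
    [NormedSpace ℝ E] [CompleteSpace E] [NormedAddCommGroup F] [NormedSpace ℝ F] [CompleteSpace F]
    {f y : ℝ → E} {y0 : E} {T : ℝ} (φ : E →L[ℝ] F) (hT : 0 ≤ T)
    (hf : IntervalIntegrable f volume 0 T)
    (hy : ∀ t ∈ Icc (0:ℝ) T, y t = y0 + ∫ s in (0:ℝ)..t, f s) :
    ∀ t ∈ Icc (0:ℝ) T, φ (y t) = φ y0 + ∫ s in (0:ℝ)..t, φ (f s) := by
  intro t ht
  have hft : IntervalIntegrable f volume 0 t :=
    hf.mono_set (uIcc_subset_uIcc_left (by rwa [uIcc_of_le hT]))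
  rw [hy t ht, map_add, φ.intervalIntegral_comp_comm hft]

def coordDiff : Euc 2 →L[ℝ] ℝ :=
  EuclideanSpace.proj (0 : Fin 2) - EuclideanSpace.proj 1

theorem coordDiff_apply (x : Euc 2) : coordDiff x = x 0 - x 1 := by
  simp [coordDiff]

theorem coordDiff_v2 (a b : ℝ) : coordDiff (v2 a b) = a - b := by
  simp [coordDiff_apply, v2]

theorem coordDiff_Asq_add_Bsq (x : Euc 2) (v : Euc 1) :
    coordDiff (Asq x + Bsq v) = 2 * x 1 := by
  simp [coordDiff_apply, Asq, Bsq, Matrix.mulVec, dotProduct, Fin.sum_univ_two]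
  ring

theorem ctrlTimes_example4_eq_empty :
    ctrlTimes (fun y => Asq y) Bsq sqC (v2 0.7 (-0.5)) (v2 (-0.6) 0.6) = ∅ := by
  refine eq_empty_of_forall_notMem ?_
  rintro T ⟨hT, u, y, -, -, hy_cont, hint, hy_eq, hy_C, hy0, hyT⟩
  have hw_eq := eq_add_integral_comp_of_eq_add_integral coordDiff hT.le hint hy_eq
  have hy0' : coordDiff (y 0) = 1.2 := by rw [hy0, coordDiff_v2]; norm_num
  have hyT' : coordDiff (y T) = -1.2 := by rw [hyT, coordDiff_v2]; norm_num
  have hbarrier : -1 ≤ coordDiff (y T) := by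
    refine le_of_eq_add_integral_of_nonneg_below (w := fun t => coordDiff (y t)) hT.le
      (coordDiff.continuous.comp_continuousOn hy_cont)
      ⟨coordDiff.integrable_comp hint.1, coordDiff.integrable_comp hint.2⟩
      (fun t ht => by rw [hw_eq t ht, hy0]) (by rw [hy0']; norm_num) ?_
    intro s hs hws
    rw [coordDiff_Asq_add_Bsq]
    rw [coordDiff_apply] at hws
    linarith [(abs_le.mp (hy_C s hs).1).1]
  linarith

/-- Example 4 of the paper, continued.  For the linear system
`ẏ = Ay + Bu` with `A = [[-2,3],[-2,1]]`, `B = (1,1)ᵀ` and constraint set the unit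
square, the point `y² = (-0.6, 0.6)ᵀ` is not reachable from `y⁰ = (0.7, -0.5)ᵀ`
under the state constraint: `T_C(y⁰, y²) = ∞`. -/
theorem example4_not_reachable :
    minTime (fun y => Asq y) Bsq sqC (v2 0.7 (-0.5)) (v2 (-0.6) 0.6) = ⊤ := by
  rw [minTime, ctrlTimes_example4_eq_empty, image_empty, sInf_empty]
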